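/- Let A : {0,1} → ℂ be an arbitrary function. Then for every y ∈ {0,1}, ∑_{x∈{0,1}} ( (−1)^{x·y}/√2 ) · e^{A(x)} = ∑_{x∈{0,1}} ∑_{h∈{0,1}} exp( W_H(y,h) + W_H(x,h) + A(x) ), where W_H(x,h) = iπ/8 − (ln 2)/2 − (iπ/2)·x − (iπ/4)·h + iπ·x·h. That is, fusing a Hadamard gadget by rule I onto a Boltzmann-machine amplitude implements multiplication by the Hadamard gate matrix H_{yx} = (−1)^{xy}/√2, with the contracted index x becoming a hidden neuron. -/
import Mathlib


open Complex Real

/-- The Hadamard gadget weight function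
`W_H(x,h) = iπ/8 − (ln 2)/2 − (iπ/2)·x − (iπ/4)·h + iπ·x·h` for binary `x, h`. -/
noncomputable def WH (x h : Fin 2) : ℂ :=
  Complex.I * Real.pi / 8 - Real.log 2 / 2 - Complex.I * Real.pi / 2 * ((x : ℕ) : ℂ)
    - Complex.I * Real.pi / 4 * ((h : ℕ) : ℂ) + Complex.I * Real.pi * ((x : ℕ) : ℂ) * ((h : ℕ) : ℂ)

lemma expc (a b : ℝ) : Complex.exp (↑a + ↑b * Complex.I)
    = ↑(Real.exp a) * (↑(Real.cos b) + ↑(Real.sin b) * Complex.I) := by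
  rw [Complex.exp_add, Complex.exp_mul_I]
  norm_cast

lemma key (x y : Fin 2) :
    Complex.exp (WH y 0 + WH x 0) + Complex.exp (WH y 1 + WH x 1)
      = (-1 : ℂ) ^ ((x : ℕ) * (y : ℕ)) / (Real.sqrt 2 : ℂ) := by
  have e2 : Real.exp (-Real.log 2) = 1/2 := by
    rw [Real.exp_neg, Real.exp_log (by norm_num : (0:ℝ) < 2)]; norm_num
  have hs : Real.sqrt 2 * Real.sqrt 2 = 2 := Real.mul_self_sqrt (by norm_num)
  have hsC : ((Real.sqrt 2 : ℝ) : ℂ) * ((Real.sqrt 2 : ℝ) : ℂ) = 2 := by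
    norm_cast
  have s2 : (Real.sqrt 2 : ℂ) ≠ 0 := by
    intro h
    rw [Complex.ofReal_eq_zero] at h
    nlinarith [hs]
  have c34 : Real.cos (3*Real.pi/4) = -(Real.sqrt 2/2) := by
    rw [show 3*Real.pi/4 = Real.pi - Real.pi/4 by ring, Real.cos_pi_sub,
      Real.cos_pi_div_four]
  have s34 : Real.sin (3*Real.pi/4) = Real.sqrt 2/2 := by
    rw [show 3*Real.pi/4 = Real.pi - Real.pi/4 by ring, Real.sin_pi_sub,
      Real.sin_pi_div_four]
  fin_cases x <;> fin_cases y <;> beta_reduce <;>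
      simp only [Fin.zero_eta, Fin.mk_one, Fin.val_zero, Fin.val_one]
  · rw [show WH 0 0 + WH 0 0 = ↑(-Real.log 2) + ↑(Real.pi/4) * Complex.I by
        simp only [WH, Fin.val_zero, Nat.cast_zero]; push_cast; ring,
      show WH 0 1 + WH 0 1 = ↑(-Real.log 2) + ↑(-(Real.pi/4)) * Complex.I by
        simp only [WH, Fin.val_zero, Fin.val_one, Nat.cast_zero, Nat.cast_one]; push_cast; ring,
      expc, expc]
    simp only [e2, Real.cos_neg, Real.sin_neg, Real.cos_pi_div_four, Real.sin_pi_div_four]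
    push_cast
    rw [eq_div_iff s2]
    linear_combination hsC / 2
  · rw [show WH 1 0 + WH 0 0 = ↑(-Real.log 2) + ↑(-(Real.pi/4)) * Complex.I by
        simp only [WH, Fin.val_zero, Fin.val_one, Nat.cast_zero, Nat.cast_one]; push_cast; ring,
      show WH 1 1 + WH 0 1 = ↑(-Real.log 2) + ↑(Real.pi/4) * Complex.I by
        simp only [WH, Fin.val_zero, Fin.val_one, Nat.cast_zero, Nat.cast_one]; push_cast; ring,
      expc, expc]
    simp only [e2, Real.cos_neg, Real.sin_neg, Real.cos_pi_div_four, Real.sin_pi_div_four]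
    push_cast
    rw [eq_div_iff s2]
    linear_combination hsC / 2
  · rw [show WH 0 0 + WH 1 0 = ↑(-Real.log 2) + ↑(-(Real.pi/4)) * Complex.I by
        simp only [WH, Fin.val_zero, Fin.val_one, Nat.cast_zero, Nat.cast_one]; push_cast; ring,
      show WH 0 1 + WH 1 1 = ↑(-Real.log 2) + ↑(Real.pi/4) * Complex.I by
        simp only [WH, Fin.val_zero, Fin.val_one, Nat.cast_zero, Nat.cast_one]; push_cast; ring,
      expc, expc]
    simp only [e2, Real.cos_neg, Real.sin_neg, Real.cos_pi_div_four, Real.sin_pi_div_four]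
    push_cast
    rw [eq_div_iff s2]
    linear_combination hsC / 2
  · rw [show WH 1 0 + WH 1 0 = ↑(-Real.log 2) + ↑(-(3*Real.pi/4)) * Complex.I by
        simp only [WH, Fin.val_zero, Fin.val_one, Nat.cast_zero, Nat.cast_one]; push_cast; ring,
      show WH 1 1 + WH 1 1 = ↑(-Real.log 2) + ↑(3*Real.pi/4) * Complex.I by
        simp only [WH, Fin.val_zero, Fin.val_one, Nat.cast_zero, Nat.cast_one]; push_cast; ring,
      expc, expc]
    simp only [e2, Real.cos_neg, Real.sin_neg, c34, s34]
    push_cast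
    rw [eq_div_iff s2]
    linear_combination -hsC / 2

/-- Fusing a Hadamard gadget by rule I onto a Boltzmann-machine amplitude `e^{A(x)}`
implements multiplication by the Hadamard matrix `H_{yx} = (−1)^{xy}/√2`, the contracted
index `x` becoming a hidden neuron. -/
theorem hadamard_fusion (A : Fin 2 → ℂ) (y : Fin 2) :
    ∑ x : Fin 2, ((-1 : ℂ) ^ ((x : ℕ) * (y : ℕ)) / (Real.sqrt 2 : ℂ)) * Complex.exp (A x)
      = ∑ x : Fin 2, ∑ h : Fin 2, Complex.exp (WH y h + WH x h + A x) := by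
  simp only [Fin.sum_univ_two]
  rw [Complex.exp_add (WH y 0 + WH 0 0) (A 0), Complex.exp_add (WH y 1 + WH 0 1) (A 0),
    Complex.exp_add (WH y 0 + WH 1 0) (A 1), Complex.exp_add (WH y 1 + WH 1 1) (A 1),
    ← key 0 y, ← key 1 y]
  ring
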